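/- arXiv:1302.3514 — 3 statements merged into one kernel-verified Lean document; each statement's English description precedes it below -/
import Mathlib

section
/- Let a, a' > 0. If W' is a random variable with distribution β²_{a+a', a'} independent of X with distribution β¹_{a, a'}, then the random variable 1/(1 + W'·X) has distribution β¹_{a', a}. -/
open MeasureTheory ProbabilityTheory Real Set Filter Topology

noncomputable def gammaDens (p σ y : ℝ) : ℝ :=
  if 0 < y then σ ^ p / Real.Gamma p * Real.exp (-(σ * y)) * y ^ (p - 1) else 0

noncomputable def gammaM (p σ : ℝ) : Measure ℝ :=
  MeasureTheory.volume.withDensity fun y => ENNReal.ofReal (gammaDens p σ y)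

noncomputable def beta1Dens (p q x : ℝ) : ℝ :=
  if 0 < x ∧ x < 1 then
    Real.Gamma (p + q) / (Real.Gamma p * Real.Gamma q) * x ^ (p - 1) * (1 - x) ^ (q - 1)
  else 0

noncomputable def beta1 (p q : ℝ) : Measure ℝ :=
  MeasureTheory.volume.withDensity fun x => ENNReal.ofReal (beta1Dens p q x)

noncomputable def beta2Dens (p q y : ℝ) : ℝ :=
  if 0 < y then
    Real.Gamma (p + q) / (Real.Gamma p * Real.Gamma q) * y ^ (p - 1) * (1 + y) ^ (-(p + q))
  else 0

noncomputable def beta2 (p q : ℝ) : Measure ℝ :=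
  MeasureTheory.volume.withDensity fun y => ENNReal.ofReal (beta2Dens p q y)

/-- Pochhammer (rising factorial) symbol `(a)_n`. -/
noncomputable def poch (a : ℝ) (n : ℕ) : ℝ := ∏ i ∈ Finset.range n, (a + (i : ℝ))

/-- Gauss hypergeometric function `₂F₁(a,b;c;x)`. -/
noncomputable def F21 (a b c x : ℝ) : ℝ :=
  ∑' n : ℕ, poch a n * poch b n / ((n.factorial : ℝ) * poch c n) * x ^ n

/-- Generalized hypergeometric `₃F₂(a₁,a₂,a₃;b₁,b₂;1)` at unit argument. -/
noncomputable def F32one (a1 a2 a3 b1 b2 : ℝ) : ℝ :=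
  ∑' n : ℕ, poch a1 n * poch a2 n * poch a3 n /
    ((n.factorial : ℝ) * poch b1 n * poch b2 n)

/-- Normalizing constant of the real beta-hypergeometric distribution. -/
noncomputable def Cbh (a a' b : ℝ) : ℝ :=
  Real.Gamma (a + b) / (Real.Gamma a * Real.Gamma b * F32one a a b (a + b) (a + a'))

noncomputable def bhDens (a a' b x : ℝ) : ℝ :=
  if 0 < x ∧ x < 1 then
    Cbh a a' b * x ^ (a - 1) * (1 - x) ^ (b - 1) * F21 a b (a + a') x
  else 0

/-- The real beta-hypergeometric distribution `μ_{a,a',b}`. -/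
noncomputable def bhMeasure (a a' b : ℝ) : Measure ℝ :=
  MeasureTheory.volume.withDensity fun x => ENNReal.ofReal (bhDens a a' b x)

/-!
Given `X = x`, the substitution `w = (1 - v) / (v x)` shows that `1 / (1 + x W')` has an
explicit density on `(0, 1)`. Averaging it against the law of `X` leaves, for each `v`, an
Euler-type integral `∫₀¹ x^(p-1) (1-x)^(q-1) (α x + β (1-x))^(-(p+q)) dx = α^(-p) β^(-q) B(p, q)`,
which the Möbius change of variables `x ↦ α x / (α x + β (1 - x))` of `(0, 1)` turns into the
Beta integral; what remains is the `β¹_{a', a}` density.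
-/

open scoped ENNReal

lemma lintegral_rpow_mul_one_sub_rpow {p q : ℝ} (hp : 0 < p) (hq : 0 < q) :
    ∫⁻ x in Ioo (0 : ℝ) 1, ENNReal.ofReal (x ^ (p - 1) * (1 - x) ^ (q - 1)) =
      ENNReal.ofReal (beta p q) := by
  have hB := beta_pos hp hq
  have h := lintegral_betaPDF_eq_one hp hq
  simp_rw [lintegral_betaPDF, mul_assoc, ENNReal.ofReal_mul (one_div_pos.2 hB).le] at h
  rw [lintegral_const_mul' _ _ ENNReal.ofReal_ne_top] at h
  calc _ = ENNReal.ofReal (beta p q * (1 / beta p q)) *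
        ∫⁻ x in Ioo (0 : ℝ) 1, ENNReal.ofReal (x ^ (p - 1) * (1 - x) ^ (q - 1)) := by
          rw [mul_one_div_cancel hB.ne', ENNReal.ofReal_one, one_mul]
    _ = ENNReal.ofReal (beta p q) := by
          rw [ENNReal.ofReal_mul hB.le, mul_assoc, h, mul_one]

lemma beta1Dens_eq_betaPDFReal (p q : ℝ) : beta1Dens p q = betaPDFReal p q := by
  ext x
  simp only [beta1Dens, betaPDFReal, beta, one_div_div]


noncomputable def mobiusIoo (α β x : ℝ) : ℝ := α * x / (α * x + β * (1 - x))

section Mobius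

variable {α β x : ℝ}

lemma mobiusIoo_denom_pos (hα : 0 < α) (hβ : 0 < β) (hx : x ∈ Ioo (0 : ℝ) 1) :
    0 < α * x + β * (1 - x) := by
  have := sub_pos.2 hx.2
  have := hx.1
  positivity

lemma mapsTo_mobiusIoo (hα : 0 < α) (hβ : 0 < β) :
    MapsTo (mobiusIoo α β) (Ioo 0 1) (Ioo 0 1) := by
  intro x hx
  have hD := mobiusIoo_denom_pos hα hβ hx
  have : 0 < β * (1 - x) := mul_pos hβ (sub_pos.2 hx.2)
  exact ⟨div_pos (mul_pos hα hx.1) hD, (div_lt_one hD).2 (by linarith)⟩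

lemma one_sub_mobiusIoo (h : α * x + β * (1 - x) ≠ 0) :
    1 - mobiusIoo α β x = mobiusIoo β α (1 - x) := by
  unfold mobiusIoo
  rw [show β * (1 - x) + α * (1 - (1 - x)) = α * x + β * (1 - x) by ring]
  field_simp
  ring

lemma mobiusIoo_mobiusIoo (hα : 0 < α) (hβ : 0 < β) (hx : x ∈ Ioo (0 : ℝ) 1) :
    mobiusIoo β α (mobiusIoo α β x) = x := by
  have hD := (mobiusIoo_denom_pos hα hβ hx).ne'
  have hD' : β * mobiusIoo α β x + α * (1 - mobiusIoo α β x) = α * β / (α * x + β * (1 - x)) := by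
    unfold mobiusIoo
    field_simp
    ring
  rw [mobiusIoo, hD']
  unfold mobiusIoo
  field_simp

lemma bijOn_mobiusIoo (hα : 0 < α) (hβ : 0 < β) : BijOn (mobiusIoo α β) (Ioo 0 1) (Ioo 0 1) :=
  InvOn.bijOn ⟨fun _ hx => mobiusIoo_mobiusIoo hα hβ hx, fun _ hx => mobiusIoo_mobiusIoo hβ hα hx⟩
    (mapsTo_mobiusIoo hα hβ) (mapsTo_mobiusIoo hβ hα)

lemma hasDerivAt_mobiusIoo (h : α * x + β * (1 - x) ≠ 0) :
    HasDerivAt (mobiusIoo α β) (α * β / (α * x + β * (1 - x)) ^ 2) x := by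
  have hnum : HasDerivAt (fun x => α * x) α x := by simpa using (hasDerivAt_id x).const_mul α
  have hden : HasDerivAt (fun x => α * x + β * (1 - x)) (α - β) x := by
    have := hnum.add (((hasDerivAt_id x).const_sub 1).const_mul β)
    simp only [id, mul_neg, mul_one, ← sub_eq_add_neg] at this
    exact this
  exact (hnum.div hden h).congr_deriv (by ring)

end Mobius

lemma lintegral_rpow_mul_one_sub_rpow_mul_rpow {p q α β : ℝ} (hp : 0 < p) (hq : 0 < q)
    (hα : 0 < α) (hβ : 0 < β) :
    ∫⁻ x in Ioo (0 : ℝ) 1,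
        ENNReal.ofReal (x ^ (p - 1) * (1 - x) ^ (q - 1) * (α * x + β * (1 - x)) ^ (-(p + q))) =
      ENNReal.ofReal (α ^ (-p) * β ^ (-q) * beta p q) := by
  have hderiv : ∀ x ∈ Ioo (0 : ℝ) 1, HasDerivWithinAt (mobiusIoo α β)
      (α * β / (α * x + β * (1 - x)) ^ 2) (Ioo 0 1) x := fun x hx =>
    (hasDerivAt_mobiusIoo (mobiusIoo_denom_pos hα hβ hx).ne').hasDerivWithinAt
  calc _ = ∫⁻ x in Ioo (0 : ℝ) 1, ENNReal.ofReal (α ^ (-p) * β ^ (-q)) *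
        (ENNReal.ofReal |α * β / (α * x + β * (1 - x)) ^ 2| *
          ENNReal.ofReal (mobiusIoo α β x ^ (p - 1) * (1 - mobiusIoo α β x) ^ (q - 1))) := by
        refine setLIntegral_congr_fun measurableSet_Ioo fun x hx => ?_
        have hD := mobiusIoo_denom_pos hα hβ hx
        rw [one_sub_mobiusIoo hD.ne', ← ENNReal.ofReal_mul (abs_nonneg _),
          ← ENNReal.ofReal_mul (by positivity), abs_of_pos (by positivity)]
        unfold mobiusIoo
        rw [show β * (1 - x) + α * (1 - (1 - x)) = α * x + β * (1 - x) by ring]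
        have hx0 := hx.1
        have hx1 := sub_pos.2 hx.2
        generalize 1 - x = y at *
        generalize α * x + β * y = D at *
        congr 1
        refine Real.log_injOn_pos (by simp only [mem_Ioi]; positivity)
          (by simp only [mem_Ioi]; positivity) ?_
        simp (disch := positivity) only [Real.log_mul, Real.log_div, Real.log_rpow, Real.log_pow]
        push_cast
        ring
    _ = ENNReal.ofReal (α ^ (-p) * β ^ (-q)) *
        ∫⁻ s in mobiusIoo α β '' Ioo 0 1, ENNReal.ofReal (s ^ (p - 1) * (1 - s) ^ (q - 1)) := by
        rw [lintegral_image_eq_lintegral_abs_deriv_mul measurableSet_Ioo hderiv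
          (bijOn_mobiusIoo hα hβ).injOn, lintegral_const_mul' _ _ ENNReal.ofReal_ne_top]
    _ = _ := by
        rw [(bijOn_mobiusIoo hα hβ).image_eq, lintegral_rpow_mul_one_sub_rpow hp hq,
          ← ENNReal.ofReal_mul (by positivity)]

lemma lintegral_beta1 (p q : ℝ) (f : ℝ → ℝ≥0∞) :
    ∫⁻ x, f x ∂beta1 p q = ∫⁻ x in Ioo 0 1, ENNReal.ofReal (beta1Dens p q x) * f x := by
  rw [beta1, lintegral_withDensity_eq_lintegral_mul_non_measurable _
    (by rw [beta1Dens_eq_betaPDFReal]; fun_prop) (ae_of_all _ fun _ => ENNReal.ofReal_lt_top)]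
  refine (setLIntegral_eq_of_support_subset fun x hx => ?_).symm
  by_contra h
  simp [beta1Dens, show ¬(0 < x ∧ x < 1) from h] at hx

lemma lintegral_beta2 (p q : ℝ) (f : ℝ → ℝ≥0∞) :
    ∫⁻ y, f y ∂beta2 p q = ∫⁻ y in Ioi 0, ENNReal.ofReal (beta2Dens p q y) * f y := by
  have hmeas : Measurable (beta2Dens p q) :=
    Measurable.ite measurableSet_Ioi (by fun_prop) (by fun_prop)
  rw [beta2, lintegral_withDensity_eq_lintegral_mul_non_measurable _ hmeas.ennreal_ofReal
    (ae_of_all _ fun _ => ENNReal.ofReal_lt_top)]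
  refine (setLIntegral_eq_of_support_subset fun y hy => ?_).symm
  by_contra h
  simp [beta2Dens, show ¬(0 < y) from h] at hy

instance (p q : ℝ) : SFinite (beta1 p q) := by unfold beta1; infer_instance

instance (p q : ℝ) : SFinite (beta2 p q) := by unfold beta2; infer_instance

/-- The density on `(0, 1)` of `1 / (1 + x W)` when `W ∼ β²_{p,q}`. -/
noncomputable def invOneAddMulBeta2Dens (p q x v : ℝ) : ℝ :=
  Real.Gamma (p + q) / (Real.Gamma p * Real.Gamma q) *
    (1 - v) ^ (p - 1) * v ^ (q - 1) * x ^ q * (1 - v + v * x) ^ (-(p + q))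

lemma lintegral_beta2_comp_inv_one_add_mul (p q : ℝ) {x : ℝ} (hx : 0 < x) (g : ℝ → ℝ≥0∞) :
    ∫⁻ w, g (1 / (1 + w * x)) ∂beta2 p q =
      ∫⁻ v in Ioo 0 1, ENNReal.ofReal (invOneAddMulBeta2Dens p q x v) * g v := by
  set φ : ℝ → ℝ := fun v => (1 - v) / (v * x)
  have hinv : ∀ v ∈ Ioo (0 : ℝ) 1, 1 / (1 + φ v * x) = v := fun v hv => by
    have := hv.1.ne'
    simp only [φ]
    field_simp
    ring
  have hbij : BijOn φ (Ioo 0 1) (Ioi 0) := by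
    refine InvOn.bijOn (f' := fun w => 1 / (1 + w * x)) ⟨hinv, fun w (hw : 0 < w) => ?_⟩
      (fun v hv => div_pos (sub_pos.2 hv.2) (mul_pos hv.1 hx)) fun w (hw : 0 < w) => ?_
    · have : 1 + w * x ≠ 0 := by positivity
      simp only [φ]
      field_simp
      ring
    · have : 0 < w * x := mul_pos hw hx
      exact ⟨by positivity, (div_lt_one (by positivity)).2 (by linarith)⟩
  have hderiv : ∀ v ∈ Ioo (0 : ℝ) 1,
      HasDerivWithinAt φ (-1 / (v ^ 2 * x)) (Ioo 0 1) v := fun v hv => by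
    have hvx : v * x ≠ 0 := (mul_pos hv.1 hx).ne'
    refine ((((hasDerivAt_id v).const_sub 1).div ((hasDerivAt_id v).mul_const x) hvx).congr_deriv
      ?_).hasDerivWithinAt
    simp only [id]
    field_simp
    ring
  rw [lintegral_beta2, ← hbij.image_eq,
    lintegral_image_eq_lintegral_abs_deriv_mul measurableSet_Ioo hderiv hbij.injOn]
  refine setLIntegral_congr_fun measurableSet_Ioo fun v hv => ?_
  have hv0 := hv.1
  have hv1 := sub_pos.2 hv.2
  have hφ : 0 < φ v := hbij.mapsTo hv
  rw [hinv v hv, ← mul_assoc, ← ENNReal.ofReal_mul (abs_nonneg _), beta2Dens, if_pos hφ,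
    abs_of_neg (div_neg_of_neg_of_pos neg_one_lt_zero (by positivity)), neg_div, neg_neg]
  congr 2
  have hvar : 1 / (v ^ 2 * x) * ((φ v) ^ (p - 1) * (1 + φ v) ^ (-(p + q))) =
      (1 - v) ^ (p - 1) * v ^ (q - 1) * x ^ q * (1 - v + v * x) ^ (-(p + q)) := by
    simp only [φ]
    rw [show 1 + (1 - v) / (v * x) = (1 - v + v * x) / (v * x) by field_simp; ring]
    have hD : 0 < 1 - v + v * x := by positivity
    generalize 1 - v = y at *
    generalize y + v * x = D at *
    refine Real.log_injOn_pos (by simp only [mem_Ioi]; positivity)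
      (by simp only [mem_Ioi]; positivity) ?_
    simp (disch := positivity) only [Real.log_mul, Real.log_div, Real.log_rpow, Real.log_pow,
      Real.log_one]
    push_cast
    ring
  rw [invOneAddMulBeta2Dens]
  linear_combination Real.Gamma (p + q) / (Real.Gamma p * Real.Gamma q) * hvar

lemma lintegral_beta1Dens_mul_invOneAddMulBeta2Dens {a b q v : ℝ} (ha : 0 < a) (hb : 0 < b)
    (hq : 0 < q) (hv : v ∈ Ioo (0 : ℝ) 1) :
    ∫⁻ x in Ioo 0 1, ENNReal.ofReal (beta1Dens a b x) *
        ENNReal.ofReal (invOneAddMulBeta2Dens (a + b) q x v) =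
      ENNReal.ofReal (beta1Dens q a v) := by
  have hv0 := hv.1
  have hv1 := sub_pos.2 hv.2
  have := Real.Gamma_pos_of_pos ha
  have := Real.Gamma_pos_of_pos hb
  have := Real.Gamma_pos_of_pos hq
  have := Real.Gamma_pos_of_pos (add_pos ha hb)
  have := Real.Gamma_pos_of_pos (add_pos (add_pos ha hb) hq)
  set C := Real.Gamma (a + b) / (Real.Gamma a * Real.Gamma b) *
    (Real.Gamma (a + b + q) / (Real.Gamma (a + b) * Real.Gamma q)) * (1 - v) ^ (a + b - 1) *
      v ^ (q - 1) with hC_def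
  have hC : 0 ≤ C := by positivity
  calc _ = ∫⁻ x in Ioo 0 1, ENNReal.ofReal C *
        ENNReal.ofReal (x ^ (a + q - 1) * (1 - x) ^ (b - 1) *
          (1 * x + (1 - v) * (1 - x)) ^ (-(a + q + b))) := by
        refine setLIntegral_congr_fun measurableSet_Ioo fun x hx => ?_
        have hx0 := hx.1
        have hx1 := sub_pos.2 hx.2
        rw [beta1Dens, if_pos ⟨hx0, hx.2⟩, invOneAddMulBeta2Dens,
          ← ENNReal.ofReal_mul (by positivity), ← ENNReal.ofReal_mul hC,
          show a + q - 1 = (a - 1) + q by ring, Real.rpow_add hx0,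
          show 1 * x + (1 - v) * (1 - x) = 1 - v + v * x by ring,
          show a + q + b = a + b + q by ring, hC_def]
        ring_nf
    _ = ENNReal.ofReal (beta1Dens q a v) := by
        rw [lintegral_const_mul' _ _ ENNReal.ofReal_ne_top,
          lintegral_rpow_mul_one_sub_rpow_mul_rpow (add_pos ha hq) hb one_pos hv1,
          ← ENNReal.ofReal_mul hC, beta1Dens, if_pos ⟨hv0, hv.2⟩, Real.one_rpow, one_mul,
          show a - 1 = (a + b - 1) + -b by ring, Real.rpow_add hv1, beta,
          show a + q + b = a + b + q by ring, add_comm q a, hC_def]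
        field_simp

theorem map_beta2_prod_beta1 {a b q : ℝ} (ha : 0 < a) (hb : 0 < b) (hq : 0 < q) :
    ((beta2 (a + b) q).prod (beta1 a b)).map (fun z => 1 / (1 + z.1 * z.2)) = beta1 q a := by
  have hf : Measurable fun z : ℝ × ℝ => 1 / (1 + z.1 * z.2) := by fun_prop
  have hdens : Measurable (beta1Dens a b) := by rw [beta1Dens_eq_betaPDFReal]; fun_prop
  refine Measure.ext_of_lintegral _ fun g hg => ?_
  rw [lintegral_map hg hf, lintegral_prod_symm (fun z => g (1 / (1 + z.1 * z.2)))
    (hg.comp hf).aemeasurable, lintegral_beta1, lintegral_beta1]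
  calc _ = ∫⁻ x in Ioo 0 1, ∫⁻ v in Ioo 0 1, ENNReal.ofReal (beta1Dens a b x) *
        ENNReal.ofReal (invOneAddMulBeta2Dens (a + b) q x v) * g v := by
        refine setLIntegral_congr_fun measurableSet_Ioo fun x hx => ?_
        simp_rw [lintegral_beta2_comp_inv_one_add_mul _ _ hx.1 g, mul_assoc]
        exact (lintegral_const_mul' _ _ ENNReal.ofReal_ne_top).symm
    _ = ∫⁻ v in Ioo 0 1, ∫⁻ x in Ioo 0 1, ENNReal.ofReal (beta1Dens a b x) *
        ENNReal.ofReal (invOneAddMulBeta2Dens (a + b) q x v) * g v :=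
        lintegral_lintegral_swap (by unfold invOneAddMulBeta2Dens; fun_prop)
    _ = _ := by
        refine setLIntegral_congr_fun measurableSet_Ioo fun v hv => ?_
        rw [lintegral_mul_const _ (by unfold invOneAddMulBeta2Dens; fun_prop),
          lintegral_beta1Dens_mul_invOneAddMulBeta2Dens ha hb hq hv]

theorem beta_prop_one {Ω : Type*} [MeasurableSpace Ω] (μ : Measure Ω)
    [IsProbabilityMeasure μ] (W' X : Ω → ℝ) (hW' : Measurable W') (hX : Measurable X)
    (a a' : ℝ) (ha : 0 < a) (ha' : 0 < a')
    (hInd : IndepFun W' X μ)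
    (hW'law : μ.map W' = beta2 (a + a') a') (hXlaw : μ.map X = beta1 a a') :
    μ.map (fun ω => 1 / (1 + W' ω * X ω)) = beta1 a' a := by
  have hjoint : μ.map (fun ω => (W' ω, X ω)) = (beta2 (a + a') a').prod (beta1 a a') := by
    rw [← hW'law, ← hXlaw]
    exact (indepFun_iff_map_prod_eq_prod_map_map hW'.aemeasurable hX.aemeasurable).mp hInd
  rw [← map_beta2_prod_beta1 ha ha' ha', ← hjoint, Measure.map_map (by fun_prop) (by fun_prop)]
  rfl
end

section
/- Let a, a' > 0. If W ~ β²_{a+a', a}, X ~ β¹_{a, a'}, and W' ~ β²_{a+a', a'} are independent real random variables, then 1/(1 + W/(1 + W'·X)) has the same distribution as X. -/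
open MeasureTheory ProbabilityTheory Real Set Filter Topology

/-!
Put `S = W' X` and `T = W / (1 + S)`, so that the variable in the theorem is `1 / (1 + T)`.
Three identities between beta laws give the result:
* if `Y ~ β²_{p+q,r}` and `X ~ β¹_{p,q}` are independent then `Y X ~ β²_{p,r}`, so `S ~ β²_{a,a'}`;
* if `S ~ β²_{p,q}` and `W ~ β²_{p+q,r}` are independent then `W / (1 + S) ~ β²_{q,r}`,
  so `T ~ β²_{a',a}`;
* if `T ~ β²_{p,q}` then `1 / (1 + T) ~ β¹_{q,p}`.
The last one is a change of variables. For the first two, conditionally on the first factor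
the second one is multiplied by a constant `c > 0`, which turns a density `g` into
`u ↦ c⁻¹ g (c⁻¹ u)`; integrating `c` out leaves the beta integral
`∫₀^∞ t^(p-1) (c + d t)^(-(p+q)) dt = c^(-q) d^(-p) B(p,q)`.
-/

open Function
open scoped ENNReal

theorem map_withDensity_eq_withDensity_of_hasDerivWithinAt {s : Set ℝ} (hs : MeasurableSet s)
    {f f' : ℝ → ℝ} (hf : Measurable f) (hf' : ∀ x ∈ s, HasDerivWithinAt f (f' x) s x)
    (hinj : InjOn f s) {g h : ℝ → ℝ≥0∞} (hg : ∀ x ∉ s, g x = 0) (hh : ∀ y ∉ f '' s, h y = 0)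
    (hgh : ∀ x ∈ s, g x = ENNReal.ofReal |f' x| * h (f x)) :
    (volume.withDensity g).map f = volume.withDensity h := by
  ext t ht
  have hts : MeasurableSet (f ⁻¹' t ∩ s) := (hf ht).inter hs
  have hg_ind : s.indicator g = g := indicator_eq_self.2 fun x hx => not_imp_comm.1 (hg x) hx
  have hh_ind : (f '' s).indicator h = h := indicator_eq_self.2 fun y hy => not_imp_comm.1 (hh y) hy
  rw [Measure.map_apply hf ht, withDensity_apply _ (hf ht), withDensity_apply _ ht]
  calc ∫⁻ x in f ⁻¹' t, g x = ∫⁻ x in f ⁻¹' t ∩ s, g x := by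
        rw [← hg_ind, setLIntegral_indicator hs, hg_ind, inter_comm]
    _ = ∫⁻ x in f ⁻¹' t ∩ s, ENNReal.ofReal |f' x| * h (f x) :=
        setLIntegral_congr_fun hts fun x hx => hgh x hx.2
    _ = ∫⁻ y in t, h y := by
        rw [← lintegral_image_eq_lintegral_abs_deriv_mul hts
          (fun x hx => (hf' x hx.2).mono inter_subset_right) (hinj.mono inter_subset_right),
          image_preimage_inter, inter_comm, ← setLIntegral_indicator
            (hs.image_of_measurable_injOn hf hinj), hh_ind]

theorem map_const_mul_withDensity {c : ℝ} (hc : 0 < c) (g : ℝ → ℝ≥0∞) :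
    (volume.withDensity g).map (c * ·) =
      volume.withDensity fun u => ENNReal.ofReal c⁻¹ * g (c⁻¹ * u) := by
  refine map_withDensity_eq_withDensity_of_hasDerivWithinAt MeasurableSet.univ
    (measurable_const_mul c) (fun x _ => ((hasDerivAt_id x).const_mul c).hasDerivWithinAt)
    (mul_right_injective₀ hc.ne').injOn (by simp) (fun y hy => ?_) fun x _ => ?_
  · exact absurd ⟨c⁻¹ * y, mem_univ _, mul_inv_cancel_left₀ hc.ne' y⟩ hy
  · rw [mul_one, ← mul_assoc, ← ENNReal.ofReal_mul (abs_nonneg c), abs_of_pos hc,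
      mul_inv_cancel₀ hc.ne', ENNReal.ofReal_one, one_mul, inv_mul_cancel_left₀ hc.ne']

theorem map_mul_prod_withDensity {ν : Measure ℝ} [SFinite ν] {c : ℝ → ℝ} (hc : Measurable c)
    (hc_pos : ∀ᵐ x ∂ν, 0 < c x) {g : ℝ → ℝ≥0∞} (hg : Measurable g) :
    (ν.prod (volume.withDensity g)).map (fun z => c z.1 * z.2) =
      volume.withDensity fun u => ∫⁻ x, ENNReal.ofReal (c x)⁻¹ * g ((c x)⁻¹ * u) ∂ν := by
  have hm : Measurable fun z : ℝ × ℝ => c z.1 * z.2 := (hc.comp measurable_fst).mul measurable_snd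
  ext s hs
  rw [Measure.map_apply hm hs, Measure.prod_apply (hm hs), withDensity_apply _ hs,
    lintegral_lintegral_swap (by fun_prop)]
  refine lintegral_congr_ae ?_
  filter_upwards [hc_pos] with x hx
  rw [← withDensity_apply _ hs, ← map_const_mul_withDensity hx, Measure.map_apply
    (measurable_const_mul _) hs]
  rfl

theorem setLIntegral_Ioo_rpow_mul_one_sub_rpow {p q : ℝ} (hp : 0 < p) (hq : 0 < q) :
    ∫⁻ x in Ioo 0 1, ENNReal.ofReal (x ^ (p - 1) * (1 - x) ^ (q - 1)) =
      ENNReal.ofReal (beta p q) := by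
  have hB := beta_pos hp hq
  have h := lintegral_betaPDF_eq_one hp hq
  simp_rw [lintegral_betaPDF, mul_assoc, ENNReal.ofReal_mul (one_div_pos.2 hB).le] at h
  rw [lintegral_const_mul' _ _ ENNReal.ofReal_ne_top] at h
  calc _ = ENNReal.ofReal (beta p q) * (ENNReal.ofReal (1 / beta p q) *
        ∫⁻ x in Ioo 0 1, ENNReal.ofReal (x ^ (p - 1) * (1 - x) ^ (q - 1))) := by
        rw [← mul_assoc, ← ENNReal.ofReal_mul hB.le, mul_one_div_cancel hB.ne',
          ENNReal.ofReal_one, one_mul]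
    _ = ENNReal.ofReal (beta p q) := by rw [h, mul_one]

theorem image_mul_div_add_mul_Ioi_zero {c d : ℝ} (hc : 0 < c) (hd : 0 < d) :
    (fun t => d * t / (c + d * t)) '' Ioi 0 = Ioo 0 1 := by
  ext x
  constructor
  · rintro ⟨t, ht, rfl⟩
    have ht : 0 < t := ht
    exact ⟨by positivity, (div_lt_one (by positivity)).2 (by linarith)⟩
  · rintro ⟨hx0, hx1⟩
    refine ⟨c * x / (d * (1 - x)), div_pos (by positivity) (mul_pos hd (by linarith)), ?_⟩
    have : (1 : ℝ) - x ≠ 0 := by linarith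
    field_simp
    ring

theorem setLIntegral_Ioi_rpow_mul_rpow_add_mul {p q c d : ℝ} (hp : 0 < p) (hq : 0 < q)
    (hc : 0 < c) (hd : 0 < d) :
    ∫⁻ t in Ioi 0, ENNReal.ofReal (t ^ (p - 1) * (c + d * t) ^ (-(p + q))) =
      ENNReal.ofReal (c ^ (-q) * d ^ (-p) * beta p q) := by
  have hf' : ∀ t ∈ Ioi (0 : ℝ), HasDerivWithinAt (fun t => d * t / (c + d * t))
      (c * d / (c + d * t) ^ 2) (Ioi 0) t := by
    intro t ht
    have hA : c + d * t ≠ 0 := by have ht : 0 < t := ht; positivity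
    refine (((hasDerivAt_id t).const_mul d).div (((hasDerivAt_id t).const_mul d).const_add c)
      hA).hasDerivWithinAt.congr_deriv ?_
    simp only [id, mul_one]
    ring
  have hinj : InjOn (fun t => d * t / (c + d * t)) (Ioi 0) := by
    intro t ht s hs hts
    have ht : 0 < t := ht
    have hs : 0 < s := hs
    rw [div_eq_div_iff (by positivity) (by positivity)] at hts
    nlinarith [mul_pos hc hd]
  rw [ENNReal.ofReal_mul (by positivity), ← setLIntegral_Ioo_rpow_mul_one_sub_rpow hp hq,
    ← image_mul_div_add_mul_Ioi_zero hc hd,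
    lintegral_image_eq_lintegral_abs_deriv_mul measurableSet_Ioi hf' hinj,
    ← lintegral_const_mul' _ _ ENNReal.ofReal_ne_top]
  refine setLIntegral_congr_fun measurableSet_Ioi fun t ht => ?_
  have ht : 0 < t := ht
  have hA : 0 < c + d * t := by positivity
  rw [← ENNReal.ofReal_mul (by positivity), ← ENNReal.ofReal_mul (by positivity)]
  congr 1
  rw [abs_of_pos (by positivity), show 1 - d * t / (c + d * t) = c / (c + d * t) by
      field_simp; ring, Real.div_rpow (by positivity) hA.le, Real.div_rpow hc.le hA.le,
    Real.mul_rpow hd.le ht.le, Real.rpow_neg hc.le, Real.rpow_neg hd.le, Real.rpow_neg hA.le,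
    Real.rpow_add hA, Real.rpow_sub_one hc.ne', Real.rpow_sub_one hd.ne', Real.rpow_sub_one hA.ne',
    Real.rpow_sub_one hA.ne']
  field_simp

@[fun_prop]
theorem measurable_beta1Dens (p q : ℝ) : Measurable (beta1Dens p q) :=
  Measurable.ite (measurableSet_Ioi.inter measurableSet_Iio) (by fun_prop) measurable_const

@[fun_prop]
theorem measurable_beta2Dens (p q : ℝ) : Measurable (beta2Dens p q) :=
  Measurable.ite measurableSet_Ioi (by fun_prop) measurable_const

theorem beta1Dens_of_not_mem_Ioo {p q x : ℝ} (hx : x ∉ Ioo 0 1) : beta1Dens p q x = 0 :=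
  if_neg hx

theorem beta1Dens_of_mem_Ioo {p q x : ℝ} (hx : x ∈ Ioo 0 1) :
    beta1Dens p q x =
      Real.Gamma (p + q) / (Real.Gamma p * Real.Gamma q) * x ^ (p - 1) * (1 - x) ^ (q - 1) :=
  if_pos hx

theorem beta2Dens_of_pos {p q y : ℝ} (hy : 0 < y) :
    beta2Dens p q y =
      Real.Gamma (p + q) / (Real.Gamma p * Real.Gamma q) * y ^ (p - 1) * (1 + y) ^ (-(p + q)) :=
  if_pos hy

theorem beta2Dens_of_nonpos {p q y : ℝ} (hy : y ≤ 0) : beta2Dens p q y = 0 :=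
  if_neg hy.not_gt

theorem beta2Dens_nonneg {p q : ℝ} (hp : 0 < p) (hq : 0 < q) (y : ℝ) : 0 ≤ beta2Dens p q y := by
  unfold beta2Dens
  split_ifs
  · positivity
  · rfl

instance inst_s4 (p q : ℝ) : SFinite (beta1 p q) := by unfold beta1; infer_instance

instance inst_s4_2 (p q : ℝ) : SFinite (beta2 p q) := by unfold beta2; infer_instance

theorem ae_pos_beta2 (p q : ℝ) : ∀ᵐ y ∂beta2 p q, 0 < y := by
  rw [beta2, ae_withDensity_iff (measurable_beta2Dens p q).ennreal_ofReal]
  filter_upwards with y hy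
  by_contra h
  exact hy (by rw [beta2Dens_of_nonpos (not_lt.1 h), ENNReal.ofReal_zero])

theorem image_one_div_one_add_Ioi_zero : (fun y : ℝ => 1 / (1 + y)) '' Ioi 0 = Ioo 0 1 := by
  ext x
  constructor
  · rintro ⟨y, hy, rfl⟩
    have hy : 0 < y := hy
    exact ⟨by positivity, (div_lt_one (by positivity)).2 (by linarith)⟩
  · rintro ⟨hx0, hx1⟩
    refine ⟨(1 - x) / x, div_pos (by linarith) hx0, ?_⟩
    field_simp
    ring

theorem map_beta2_one_div_one_add (p q : ℝ) :
    (beta2 p q).map (fun y => 1 / (1 + y)) = beta1 q p := by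
  have hf' : ∀ y ∈ Ioi (0 : ℝ), HasDerivWithinAt (fun y => 1 / (1 + y)) (-1 / (1 + y) ^ 2)
      (Ioi 0) y := by
    intro y hy
    have hA : 1 + y ≠ 0 := by have hy : 0 < y := hy; positivity
    refine ((hasDerivAt_const y 1).div ((hasDerivAt_id y).const_add 1) hA).hasDerivWithinAt
      |>.congr_deriv ?_
    simp
  have hinj : InjOn (fun y : ℝ => 1 / (1 + y)) (Ioi 0) := by
    intro y hy z hz hyz
    simpa using hyz
  have himage := image_one_div_one_add_Ioi_zero
  refine map_withDensity_eq_withDensity_of_hasDerivWithinAt measurableSet_Ioi (by fun_prop) hf'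
    hinj (fun y hy => ?_) (fun x hx => ?_) fun y hy => ?_
  · rw [beta2Dens_of_nonpos (not_lt.1 hy), ENNReal.ofReal_zero]
  · rw [himage] at hx
    rw [beta1Dens_of_not_mem_Ioo hx, ENNReal.ofReal_zero]
  · have hy : 0 < y := hy
    have hA : 0 < 1 + y := by linarith
    have hmem : 1 / (1 + y) ∈ Ioo 0 1 := himage ▸ mem_image_of_mem _ hy
    rw [← ENNReal.ofReal_mul (abs_nonneg _)]
    congr 1
    rw [beta2Dens_of_pos hy, beta1Dens_of_mem_Ioo hmem, abs_div,
      abs_neg, abs_one, abs_of_pos (by positivity), show 1 - 1 / (1 + y) = y / (1 + y) by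
        field_simp; ring, add_comm q p, Real.div_rpow hy.le hA.le,
      Real.div_rpow zero_le_one hA.le, Real.one_rpow, Real.rpow_neg hA.le, Real.rpow_add hA,
      Real.rpow_sub_one hA.ne', Real.rpow_sub_one hA.ne']
    field_simp

theorem lintegral_beta2_eq_setLIntegral_Ioi (p q : ℝ) {k : ℝ → ℝ≥0∞} (hk : Measurable k) :
    ∫⁻ x, k x ∂beta2 p q = ∫⁻ x in Ioi 0, ENNReal.ofReal (beta2Dens p q x) * k x := by
  rw [beta2, lintegral_withDensity_eq_lintegral_mul _
    (measurable_beta2Dens p q).ennreal_ofReal hk, setLIntegral_eq_of_support_subset]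
  · rfl
  · intro x hx
    by_contra h
    exact hx (by simp [beta2Dens_of_nonpos (not_lt.1 h)])

theorem setLIntegral_comp_const_add_Ioi_zero (u : ℝ) (g : ℝ → ℝ≥0∞) :
    ∫⁻ t in Ioi 0, g (u + t) = ∫⁻ x in Ioi u, g x := by
  have h := lintegral_image_eq_lintegral_abs_deriv_mul (s := Ioi 0) (f := (u + ·))
    (f' := fun _ => 1) measurableSet_Ioi
    (fun t _ => ((hasDerivAt_id t).const_add u).hasDerivWithinAt)
    (add_right_injective u).injOn g
  rw [image_const_add_Ioi, add_zero] at h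
  simpa using h.symm

theorem beta2Dens_mul_beta2Dens_one_add_mul {p q r u x : ℝ} (hu : 0 < u) (hx : 0 < x) :
    beta2Dens p q x * ((1 + x) * beta2Dens (p + q) r ((1 + x) * u)) =
      Real.Gamma (p + q) / (Real.Gamma p * Real.Gamma q) *
        (Real.Gamma (p + q + r) / (Real.Gamma (p + q) * Real.Gamma r)) * u ^ (p + q - 1) *
        (x ^ (p - 1) * ((1 + u) + u * x) ^ (-(p + (q + r)))) := by
  have hA : 0 < 1 + x := by linarith
  rw [beta2Dens_of_pos hx, beta2Dens_of_pos (by positivity), Real.mul_rpow hA.le hu.le,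
    show 1 + (1 + x) * u = (1 + u) + u * x by ring, show p + q + r = p + (q + r) by ring,
    Real.rpow_neg hA.le, Real.rpow_sub_one hA.ne']
  field_simp

theorem setLIntegral_beta2Dens_mul_beta2Dens_one_add_mul {p q r : ℝ} (hp : 0 < p) (hq : 0 < q)
    (hr : 0 < r) (u : ℝ) :
    ∫⁻ x in Ioi 0, ENNReal.ofReal (beta2Dens p q x) *
        (ENNReal.ofReal (1 + x) * ENNReal.ofReal (beta2Dens (p + q) r ((1 + x) * u))) =
      ENNReal.ofReal (beta2Dens q r u) := by
  rcases le_or_gt u 0 with hu | hu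
  · rw [beta2Dens_of_nonpos hu, ENNReal.ofReal_zero]
    refine setLIntegral_eq_zero measurableSet_Ioi fun x hx => ?_
    have hx : 0 < x := hx
    rw [beta2Dens_of_nonpos (mul_nonpos_of_nonneg_of_nonpos (by positivity) hu)]
    simp
  set C := Real.Gamma (p + q) / (Real.Gamma p * Real.Gamma q) *
    (Real.Gamma (p + q + r) / (Real.Gamma (p + q) * Real.Gamma r)) with hC_def
  calc _ = ∫⁻ x in Ioi 0, ENNReal.ofReal (C * u ^ (p + q - 1)) *
        ENNReal.ofReal (x ^ (p - 1) * ((1 + u) + u * x) ^ (-(p + (q + r)))) := by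
        refine setLIntegral_congr_fun measurableSet_Ioi fun x hx => ?_
        have hx : 0 < x := hx
        rw [← ENNReal.ofReal_mul (by positivity : (0 : ℝ) ≤ C * u ^ (p + q - 1)),
          ← ENNReal.ofReal_mul (by positivity : (0 : ℝ) ≤ 1 + x),
          ← ENNReal.ofReal_mul (beta2Dens_nonneg hp hq x),
          beta2Dens_mul_beta2Dens_one_add_mul hu hx]
    _ = ENNReal.ofReal (beta2Dens q r u) := by
        rw [lintegral_const_mul' _ _ ENNReal.ofReal_ne_top,
          setLIntegral_Ioi_rpow_mul_rpow_add_mul hp (add_pos hq hr) (by linarith) hu,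
          ← ENNReal.ofReal_mul (by positivity), beta2Dens_of_pos hu, beta, hC_def,
          show p + (q + r) = p + q + r by ring, Real.rpow_neg hu.le,
          show p + q - 1 = (q - 1) + p by ring, Real.rpow_add hu]
        field_simp

theorem map_inv_one_add_mul_prod_beta2 {p q r : ℝ} (hp : 0 < p) (hq : 0 < q) (hr : 0 < r) :
    ((beta2 p q).prod (beta2 (p + q) r)).map (fun z => (1 + z.1)⁻¹ * z.2) = beta2 q r := by
  have hc : ∀ᵐ x ∂beta2 p q, 0 < (1 + x)⁻¹ := (ae_pos_beta2 p q).mono fun x hx => by positivity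
  rw [show beta2 (p + q) r = volume.withDensity _ from rfl, map_mul_prod_withDensity (by fun_prop)
    hc (measurable_beta2Dens (p + q) r).ennreal_ofReal, beta2.eq_1 q r]
  congr 1
  funext u
  rw [lintegral_beta2_eq_setLIntegral_Ioi _ _ (by fun_prop)]
  simp only [inv_inv]
  exact setLIntegral_beta2Dens_mul_beta2Dens_one_add_mul hp hq hr u

theorem beta2Dens_mul_beta1Dens_inv_mul {p q r u x : ℝ} (hu : 0 < u) (hxu : u < x) :
    beta2Dens (p + q) r x * (x⁻¹ * beta1Dens p q (x⁻¹ * u)) =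
      Real.Gamma (p + q + r) / (Real.Gamma (p + q) * Real.Gamma r) *
        (Real.Gamma (p + q) / (Real.Gamma p * Real.Gamma q)) * u ^ (p - 1) *
        ((x - u) ^ (q - 1) * (1 + x) ^ (-(p + q + r))) := by
  have hx : 0 < x := hu.trans hxu
  have hmem : x⁻¹ * u ∈ Ioo 0 1 :=
    ⟨by positivity, by rw [← div_eq_inv_mul, div_lt_one hx]; exact hxu⟩
  rw [beta2Dens_of_pos hx, beta1Dens_of_mem_Ioo hmem,
    show 1 - x⁻¹ * u = (x - u) / x by field_simp, Real.mul_rpow (by positivity) hu.le,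
    Real.div_rpow (by linarith) hx.le, Real.inv_rpow hx.le, Real.rpow_sub_one hx.ne' (p + q),
    Real.rpow_add hx, Real.rpow_sub_one hx.ne', Real.rpow_sub_one hx.ne']
  field_simp

theorem setLIntegral_beta2Dens_mul_beta1Dens_inv_mul {p q r : ℝ} (hp : 0 < p) (hq : 0 < q)
    (hr : 0 < r) (u : ℝ) :
    ∫⁻ x in Ioi 0, ENNReal.ofReal (beta2Dens (p + q) r x) *
        (ENNReal.ofReal x⁻¹ * ENNReal.ofReal (beta1Dens p q (x⁻¹ * u))) =
      ENNReal.ofReal (beta2Dens p r u) := by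
  rcases le_or_gt u 0 with hu | hu
  · rw [beta2Dens_of_nonpos hu, ENNReal.ofReal_zero]
    refine setLIntegral_eq_zero measurableSet_Ioi fun x hx => ?_
    have hx : 0 < x := hx
    have hxu : x⁻¹ * u ≤ 0 := mul_nonpos_of_nonneg_of_nonpos (by positivity) hu
    simp [beta1Dens_of_not_mem_Ioo fun h => hxu.not_gt h.1]
  set C := Real.Gamma (p + q + r) / (Real.Gamma (p + q) * Real.Gamma r) *
    (Real.Gamma (p + q) / (Real.Gamma p * Real.Gamma q)) with hC_def
  calc _ = ∫⁻ x in Ioi 0, (Ioi u).indicator (fun x => ENNReal.ofReal (C * u ^ (p - 1)) *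
        ENNReal.ofReal ((x - u) ^ (q - 1) * (1 + x) ^ (-(p + q + r)))) x := by
        refine setLIntegral_congr_fun measurableSet_Ioi fun x hx => ?_
        have hx : 0 < x := hx
        rcases le_or_gt x u with hxu | hxu
        · have : ¬x⁻¹ * u < 1 := by rw [← div_eq_inv_mul, div_lt_one hx]; exact hxu.not_gt
          simp [indicator_of_notMem (show x ∉ Ioi u from hxu.not_gt),
            beta1Dens_of_not_mem_Ioo fun h => this h.2]
        rw [indicator_of_mem (show x ∈ Ioi u from hxu),
          ← ENNReal.ofReal_mul (by positivity : (0 : ℝ) ≤ C * u ^ (p - 1)),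
          ← ENNReal.ofReal_mul (by positivity : (0 : ℝ) ≤ x⁻¹),
          ← ENNReal.ofReal_mul (beta2Dens_nonneg (add_pos hp hq) hr x),
          beta2Dens_mul_beta1Dens_inv_mul hu hxu]
    _ = ∫⁻ t in Ioi 0, ENNReal.ofReal (C * u ^ (p - 1)) *
        ENNReal.ofReal (t ^ (q - 1) * ((1 + u) + 1 * t) ^ (-(q + (p + r)))) := by
        rw [setLIntegral_indicator measurableSet_Ioi, inter_eq_left.2 (Ioi_subset_Ioi hu.le),
          ← setLIntegral_comp_const_add_Ioi_zero]
        refine setLIntegral_congr_fun measurableSet_Ioi fun t _ => ?_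
        rw [add_sub_cancel_left, one_mul, ← add_assoc, show q + (p + r) = p + q + r by ring]
    _ = ENNReal.ofReal (beta2Dens p r u) := by
        rw [lintegral_const_mul' _ _ ENNReal.ofReal_ne_top,
          setLIntegral_Ioi_rpow_mul_rpow_add_mul hq (add_pos hp hr) (by linarith) one_pos,
          ← ENNReal.ofReal_mul (by positivity), beta2Dens_of_pos hu, beta, hC_def,
          show q + (p + r) = p + q + r by ring, Real.one_rpow, mul_one]
        field_simp

theorem map_mul_prod_beta2_beta1 {p q r : ℝ} (hp : 0 < p) (hq : 0 < q) (hr : 0 < r) :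
    ((beta2 (p + q) r).prod (beta1 p q)).map (fun z => z.1 * z.2) = beta2 p r := by
  rw [beta1, map_mul_prod_withDensity (c := fun x => x) measurable_id (ae_pos_beta2 (p + q) r)
    (measurable_beta1Dens p q).ennreal_ofReal, beta2.eq_1 p r]
  congr 1
  funext u
  rw [lintegral_beta2_eq_setLIntegral_Ioi _ _ (by fun_prop)]
  exact setLIntegral_beta2Dens_mul_beta1Dens_inv_mul hp hq hr u

theorem ProbabilityTheory.IndepFun.map_comp_prodMk {Ω α β γ : Type*} [MeasurableSpace Ω]
    [MeasurableSpace α] [MeasurableSpace β] [MeasurableSpace γ] {μ : Measure Ω}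
    [IsFiniteMeasure μ] {X : Ω → α} {Y : Ω → β} (h : IndepFun X Y μ) (hX : Measurable X)
    (hY : Measurable Y) {f : α × β → γ} (hf : Measurable f) :
    μ.map (fun ω => f (X ω, Y ω)) = ((μ.map X).prod (μ.map Y)).map f := by
  rw [← (indepFun_iff_map_prod_eq_prod_map_map hX.aemeasurable hY.aemeasurable).1 h,
    Measure.map_map hf (hX.prodMk hY)]
  rfl

theorem beta_prop_two {Ω : Type*} [MeasurableSpace Ω] (μ : Measure Ω)
    [IsProbabilityMeasure μ] (W X W' : Ω → ℝ)
    (hW : Measurable W) (hX : Measurable X) (hW' : Measurable W')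
    (a a' : ℝ) (ha : 0 < a) (ha' : 0 < a')
    (hInd : iIndepFun (m := fun _ : Fin 3 => (inferInstance : MeasurableSpace ℝ)) ![W, X, W'] μ)
    (hWlaw : μ.map W = beta2 (a + a') a) (hXlaw : μ.map X = beta1 a a')
    (hW'law : μ.map W' = beta2 (a + a') a') :
    μ.map (fun ω => 1 / (1 + W ω / (1 + W' ω * X ω))) = μ.map X := by
  have hmeas : ∀ i, Measurable (![W, X, W'] i) := by
    intro i
    fin_cases i <;> assumption
  have hW'X : IndepFun W' X μ := by simpa using hInd.indepFun (show (2 : Fin 3) ≠ 1 by decide)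
  have hXW' : IndepFun (fun ω => (X ω, W' ω)) W μ := by
    simpa using hInd.indepFun_prodMk hmeas 1 2 0 (by decide) (by decide)
  have hSW : IndepFun (fun ω => W' ω * X ω) W μ :=
    hXW'.comp (φ := fun z : ℝ × ℝ => z.2 * z.1) (ψ := id) (by fun_prop) measurable_id
  have hS : μ.map (fun ω => W' ω * X ω) = beta2 a a' := by
    rw [hW'X.map_comp_prodMk hW' hX (f := fun z => z.1 * z.2) (by fun_prop), hW'law, hXlaw,
      map_mul_prod_beta2_beta1 ha ha' ha']
  have hT : μ.map (fun ω => (1 + W' ω * X ω)⁻¹ * W ω) = beta2 a' a := by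
    rw [hSW.map_comp_prodMk (hW'.mul hX) hW (f := fun z => (1 + z.1)⁻¹ * z.2) (by fun_prop), hS,
      hWlaw, map_inv_one_add_mul_prod_beta2 ha ha' ha]
  calc μ.map (fun ω => 1 / (1 + W ω / (1 + W' ω * X ω)))
      = (μ.map fun ω => (1 + W' ω * X ω)⁻¹ * W ω).map (fun y => 1 / (1 + y)) := by
        rw [Measure.map_map (by fun_prop) (by fun_prop)]
        simp only [comp_def, div_eq_inv_mul]
    _ = μ.map X := by rw [hT, map_beta2_one_div_one_add, hXlaw]
end

section
/- For a, a', b > 0 with b = a + a', the beta-hypergeometric distribution μ_{a,a',a+a'} equals the Beta distribution of the first kind β¹_{a,a'}. -/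
open MeasureTheory ProbabilityTheory Real Set Filter Topology

/-!
With `b = a + a'` the upper parameter `b` of `₂F₁(a, b; a + a'; x)` cancels against the lower
one, leaving the binomial series of `(1 - x)^(-a)`, so the density is a multiple of
`x^(a-1) (1-x)^(a'-1)`. The same cancellation reduces `₃F₂(a, a, b; a + b, a + a'; 1)` to
`₂F₁(a, a; 2a + a'; 1)`, which Gauss's summation evaluates to `Γ(2a+a') Γ(a') / Γ(a+a')²`;
hence `C(a, a', a + a') = Γ(a+a') / (Γ(a) Γ(a'))`, the beta normalising constant.
-/

lemma hasSum_of_lintegral_ofReal {ι α : Type*} [Countable ι] [MeasurableSpace α]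
    {μ : Measure α} {f : ι → α → ℝ} {g : α → ℝ} {I : ι → ℝ} {G : ℝ}
    (hf_meas : ∀ i, Measurable (f i)) (hf_nonneg : ∀ i, ∀ᵐ x ∂μ, 0 ≤ f i x)
    (hfg : ∀ᵐ x ∂μ, HasSum (fun i => f i x) (g x))
    (hI : ∀ i, ∫⁻ x, ENNReal.ofReal (f i x) ∂μ = ENNReal.ofReal (I i))
    (hI_nonneg : ∀ i, 0 ≤ I i)
    (hG : ∫⁻ x, ENNReal.ofReal (g x) ∂μ = ENNReal.ofReal G) (hG_nonneg : 0 ≤ G) :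
    HasSum I G := by
  have hsum : ∑' i, ENNReal.ofReal (I i) = ENNReal.ofReal G := by
    rw [← hG]
    simp_rw [← hI]
    rw [← lintegral_tsum fun i => (hf_meas i).ennreal_ofReal.aemeasurable]
    refine lintegral_congr_ae ?_
    filter_upwards [hfg, ae_all_iff.2 hf_nonneg] with x hx h0
    exact (ENNReal.ofReal_tsum_of_nonneg h0 hx.summable).symm.trans (by rw [hx.tsum_eq])
  have hsummable : Summable I := by
    have := ENNReal.summable_toReal (hsum ▸ ENNReal.ofReal_ne_top)
    simpa [ENNReal.toReal_ofReal (hI_nonneg _)] using this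
  convert hsummable.hasSum
  rw [← ENNReal.ofReal_eq_ofReal_iff hG_nonneg (tsum_nonneg hI_nonneg),
    ENNReal.ofReal_tsum_of_nonneg hI_nonneg hsummable, hsum]

lemma lintegral_Ioo_rpow_mul_one_sub_rpow {s u : ℝ} (hs : 0 < s) (hu : 0 < u) :
    ∫⁻ t in Ioo (0 : ℝ) 1, ENNReal.ofReal (t ^ (s - 1) * (1 - t) ^ (u - 1))
      = ENNReal.ofReal (beta s u) := by
  have h := lintegral_betaPDF_eq_one hs hu
  rw [lintegral_betaPDF] at h
  have hB := beta_pos hs hu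
  simp_rw [mul_assoc, ENNReal.ofReal_mul (one_div_pos.2 hB).le] at h
  rw [lintegral_const_mul' _ _ ENNReal.ofReal_ne_top] at h
  rw [← ENNReal.eq_div_iff (by simpa using hB) ENNReal.ofReal_ne_top] at h
  rw [h, one_div, one_div, ENNReal.ofReal_inv_of_pos hB, inv_inv]

lemma poch_nonneg {a : ℝ} (ha : 0 ≤ a) (n : ℕ) : 0 ≤ poch a n :=
  Finset.prod_nonneg fun _ _ => by positivity

lemma poch_pos {a : ℝ} (ha : 0 < a) (n : ℕ) : 0 < poch a n :=
  Finset.prod_pos fun _ _ => by positivity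

lemma Gamma_add_nat_eq_mul_poch {a : ℝ} (ha : 0 < a) (n : ℕ) :
    Gamma (a + n) = Gamma a * poch a n := by
  induction n with
  | zero => simp [poch]
  | succ n ih =>
    rw [Nat.cast_succ, ← add_assoc, Gamma_add_one (by positivity), ih, poch, poch,
      Finset.prod_range_succ]
    ring

lemma beta_add_nat {s u : ℝ} (hs : 0 < s) (hu : 0 < u) (n : ℕ) :
    beta (s + n) u = beta s u * poch s n / poch (s + u) n := by
  have := poch_pos (add_pos hs hu) n
  have := Gamma_pos_of_pos (add_pos hs hu)
  rw [beta, beta, add_right_comm, Gamma_add_nat_eq_mul_poch hs,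
    Gamma_add_nat_eq_mul_poch (add_pos hs hu)]
  field_simp

lemma poch_eq_eval_ascPochhammer (a : ℝ) (n : ℕ) : poch a n = (ascPochhammer ℝ n).eval a := by
  induction n with
  | zero => simp [poch]
  | succ n ih => rw [poch, Finset.prod_range_succ, ← poch, ih, ascPochhammer_succ_eval]

lemma poch_div_factorial_eq_choose (a : ℝ) (n : ℕ) :
    poch a n / n.factorial = Ring.choose (a + n - 1) n := by
  rw [← Ring.multichoose_eq, poch_eq_eval_ascPochhammer,
    ← Polynomial.ascPochhammer_smeval_eq_eval, ← Polynomial.ascPochhammer_smeval_cast ℕ,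
    ← Ring.factorial_nsmul_multichoose_eq_ascPochhammer, nsmul_eq_mul]
  field_simp

lemma hasSum_poch_div_factorial_mul_pow (a : ℝ) {x : ℝ} (hx : |x| < 1) :
    HasSum (fun n : ℕ => poch a n / n.factorial * x ^ n) ((1 - x) ^ (-a)) := by
  have h := (Real.one_div_one_sub_rpow_hasFPowerSeriesOnBall_zero a).hasSum
    (y := x) (by simpa [enorm_eq_nnnorm, ← NNReal.coe_lt_coe] using hx)
  simp only [FormalMultilinearSeries.ofScalars_apply_eq, smul_eq_mul, zero_add] at h
  rw [Real.rpow_neg (by linarith [abs_lt.1 hx]), ← one_div]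
  simpa only [poch_div_factorial_eq_choose] using h

/-- Euler's integral representation, summed termwise: expanding `(1 - t)^(-α)` in
`B(β, u - α) = ∫ t^(β-1) (1-t)^(u-1) (1-t)^(-α) dt` gives the series. -/
theorem hasSum_poch_div_factorial_mul_beta {α β u : ℝ} (hα : 0 ≤ α) (hβ : 0 < β)
    (hu : α < u) :
    HasSum (fun n : ℕ => poch α n / n.factorial * beta (β + n) u) (beta β (u - α)) := by
  have hu₀ : 0 < u := by linarith
  have huα : 0 < u - α := by linarith
  refine hasSum_of_lintegral_ofReal (μ := volume.restrict (Ioo 0 1))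
    (f := fun n t => poch α n / n.factorial * (t ^ (β + n - 1) * (1 - t) ^ (u - 1)))
    (g := fun t => t ^ (β - 1) * (1 - t) ^ (u - α - 1)) (fun n => by fun_prop)
    (fun n => ?_) ?_ (fun n => ?_) (fun n => ?_) (lintegral_Ioo_rpow_mul_one_sub_rpow hβ huα)
    (beta_pos hβ huα).le
  · filter_upwards [ae_restrict_mem measurableSet_Ioo] with t ⟨ht0, ht1⟩
    have := poch_nonneg hα n
    have : 0 < 1 - t := by linarith
    positivity
  · filter_upwards [ae_restrict_mem measurableSet_Ioo] with t ⟨ht0, ht1⟩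
    have h1t : 0 < 1 - t := by linarith
    have h := (hasSum_poch_div_factorial_mul_pow α (abs_lt.2 ⟨by linarith, ht1⟩)).mul_right
      (t ^ (β - 1) * (1 - t) ^ (u - 1))
    rw [mul_left_comm, ← rpow_add h1t, show -α + (u - 1) = u - α - 1 by ring] at h
    refine h.congr_fun fun n => ?_
    rw [add_sub_right_comm, rpow_add ht0, rpow_natCast]
    ring
  · have := poch_nonneg hα n
    rw [ENNReal.ofReal_mul (by positivity),
      ← lintegral_Ioo_rpow_mul_one_sub_rpow (by positivity : 0 < β + n) hu₀,
      ← lintegral_const_mul' _ _ ENNReal.ofReal_ne_top]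
    simp_rw [← ENNReal.ofReal_mul (by positivity : 0 ≤ poch α n / n.factorial)]
  · have := poch_nonneg hα n
    have := beta_pos (by positivity : 0 < β + n) hu₀
    positivity

theorem hasSum_F21_one {α β γ : ℝ} (hα : 0 ≤ α) (hβ : 0 < β) (hγ : α + β < γ) :
    HasSum (fun n : ℕ => poch α n * poch β n / (n.factorial * poch γ n))
      (Gamma γ * Gamma (γ - α - β) / (Gamma (γ - α) * Gamma (γ - β))) := by
  have hγ₀ : 0 < γ := by linarith
  have hγβ : 0 < γ - β := by linarith
  have hval : beta β (γ - β - α) / beta β (γ - β)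
      = Gamma γ * Gamma (γ - α - β) / (Gamma (γ - α) * Gamma (γ - β)) := by
    have := Gamma_pos_of_pos hγβ
    have := Gamma_pos_of_pos (by linarith : 0 < γ - α)
    have := Gamma_pos_of_pos hγ₀
    have := Gamma_pos_of_pos hβ
    unfold beta
    rw [show β + (γ - β - α) = γ - α by ring, add_sub_cancel, sub_right_comm]
    field_simp
  have h := (hasSum_poch_div_factorial_mul_beta hα hβ (by linarith : α < γ - β)).div_const
    (beta β (γ - β))
  rw [hval] at h
  refine h.congr_fun fun n => ?_
  have := poch_pos hγ₀ n
  have := beta_pos hβ hγβ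
  rw [beta_add_nat hβ hγβ, add_sub_cancel]
  field_simp

theorem F21_one {α β γ : ℝ} (hα : 0 ≤ α) (hβ : 0 < β) (hγ : α + β < γ) :
    F21 α β γ 1 = Gamma γ * Gamma (γ - α - β) / (Gamma (γ - α) * Gamma (γ - β)) := by
  simpa only [F21, one_pow, mul_one] using (hasSum_F21_one hα hβ hγ).tsum_eq

lemma F32one_eq_F21_one (a b : ℝ) {c : ℝ} (hc : 0 < c) (d : ℝ) :
    F32one a b c d c = F21 a b d 1 := by
  unfold F32one F21
  congr 1 with n
  have := (poch_pos hc n).ne'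
  field_simp
  ring

lemma F21_eq_one_sub_rpow_neg (a : ℝ) {c x : ℝ} (hc : 0 < c) (hx : |x| < 1) :
    F21 a c c x = (1 - x) ^ (-a) := by
  rw [F21, ← (hasSum_poch_div_factorial_mul_pow a hx).tsum_eq]
  congr 1 with n
  have := (poch_pos hc n).ne'
  field_simp

lemma Cbh_self_add {a a' : ℝ} (ha : 0 < a) (ha' : 0 < a') :
    Cbh a a' (a + a') = Gamma (a + a') / (Gamma a * Gamma a') := by
  rw [Cbh, F32one_eq_F21_one _ _ (by positivity), F21_one ha.le ha (by linarith),
    show a + (a + a') - a - a = a' by ring, show a + (a + a') - a = a + a' by ring]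
  have := Gamma_pos_of_pos ha
  have := Gamma_pos_of_pos ha'
  have := Gamma_pos_of_pos (by positivity : 0 < a + a')
  have := Gamma_pos_of_pos (by positivity : 0 < a + (a + a'))
  field_simp

lemma bhDens_self_add {a a' : ℝ} (ha : 0 < a) (ha' : 0 < a') :
    bhDens a a' (a + a') = beta1Dens a a' := by
  ext x
  unfold bhDens beta1Dens
  split_ifs with hx
  · have h1x : 0 < 1 - x := by linarith [hx.2]
    rw [Cbh_self_add ha ha', F21_eq_one_sub_rpow_neg a (by positivity)
      (abs_lt.2 ⟨by linarith [hx.1], hx.2⟩), mul_assoc, ← rpow_add h1x,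
      show a + a' - 1 + -a = a' - 1 by ring]
  · rfl

theorem bh_eq_beta1 (a a' : ℝ) (ha : 0 < a) (ha' : 0 < a') :
    bhMeasure a a' (a + a') = beta1 a a' := by
  rw [bhMeasure, bhDens_self_add ha ha', beta1]
end
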